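/- arXiv:2510.10310 — 12 statements merged into one kernel-verified Lean document; each statement's English description precedes it below -/
import Mathlib

section
/- Let c be a nonzero integer, d ≥ 3 an integer, p a prime dividing d, and ε ∈ {1, −1}. If α, y are integers with α^d + c = ε·y^p, then |α| ≤ √|c|. -/
/-!
Writing d = p k, the equation says c = ε y^p - (α^k)^p. Since c ≠ 0 and ε y^p is, up to sign,
a p-th power, it differs from the p-th power (α^k)^p by at least |α^k|^(p-1) = |α|^(k(p-1)),
and k (p - 1) ≥ 2 because p k ≥ 3.
-/

lemma pow_pred_add_pow_le_pow {m n : ℤ} {p : ℕ} (hp : p ≠ 0) (hn : 0 ≤ n) (hnm : n < m) :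
    m ^ (p - 1) + n ^ p ≤ m ^ p := by
  obtain ⟨q, rfl⟩ := Nat.exists_eq_succ_of_ne_zero hp
  have hm : 0 ≤ m := hn.trans hnm.le
  have hnq : n ^ q ≤ m ^ q := pow_le_pow_left₀ hn hnm.le q
  simp only [Nat.succ_sub_one, pow_succ]
  nlinarith [pow_nonneg hm q]

lemma abs_pow_pred_le_abs_sub_pow {u v b : ℤ} {p : ℕ} (hp : 2 ≤ p) (hb : 0 ≤ b)
    (hu : |u| = b ^ p) (huv : u ≠ v ^ p) : |v| ^ (p - 1) ≤ |u - v ^ p| := by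
  have hv : |v ^ p| = |v| ^ p := abs_pow v p
  rcases lt_trichotomy b |v| with hlt | heq | hgt
  · have := pow_pred_add_pow_le_pow (p := p) (by omega) hb hlt
    have := abs_sub_abs_le_abs_sub (v ^ p) u
    rw [abs_sub_comm] at this
    linarith
  · obtain rfl : u = -v ^ p := by
      rcases abs_eq_abs.mp (hu.trans (heq ▸ hv.symm)) with h | h
      · exact absurd h huv
      · exact h
    rw [show -v ^ p - v ^ p = -(2 * v ^ p) by ring, abs_neg, abs_mul, hv, abs_two]
    rcases (abs_nonneg v).eq_or_lt with h0 | h1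
    · rw [← h0, zero_pow (by omega : p - 1 ≠ 0)]
      positivity
    · calc |v| ^ (p - 1) ≤ |v| ^ p := pow_le_pow_right₀ h1 (by omega)
        _ ≤ 2 * |v| ^ p := by nlinarith [pow_nonneg (abs_nonneg v) p]
  · have := pow_pred_add_pow_le_pow (p := p) (by omega) (abs_nonneg v) hgt
    have := pow_le_pow_left₀ (abs_nonneg v) hgt.le (p - 1)
    have := abs_sub_abs_le_abs_sub u (v ^ p)
    linarith

lemma two_le_mul_pred {p k : ℕ} (hp : 2 ≤ p) (hpk : 3 ≤ p * k) : 2 ≤ k * (p - 1) := by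
  rcases hp.eq_or_lt with rfl | hp3
  · omega
  · have hk : 1 ≤ k := Nat.pos_of_ne_zero (by rintro rfl; simp at hpk)
    calc 2 = 1 * 2 := rfl
      _ ≤ k * (p - 1) := Nat.mul_le_mul hk (by omega)

lemma sq_le_abs_of_pow_add_eq {α c u b : ℤ} {p k : ℕ} (hc : c ≠ 0) (hp : 2 ≤ p)
    (hpk : 3 ≤ p * k) (hb : 0 ≤ b) (hu : |u| = b ^ p) (h : α ^ (p * k) + c = u) :
    α ^ 2 ≤ |c| := by
  have hαk : α ^ (p * k) = (α ^ k) ^ p := by rw [← pow_mul, mul_comm]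
  have hc' : c = u - (α ^ k) ^ p := by rw [← hαk]; linarith
  have hgap : |α| ^ (k * (p - 1)) ≤ |c| := by
    rw [pow_mul, ← abs_pow, hc']
    exact abs_pow_pred_le_abs_sub_pow hp hb hu (fun huα => hc (by rw [hc', huα, sub_self]))
  rcases eq_or_ne α 0 with rfl | hα
  · simp
  · calc α ^ 2 = |α| ^ 2 := (sq_abs α).symm
      _ ≤ |α| ^ (k * (p - 1)) := pow_le_pow_right₀ (Int.one_le_abs hα) (two_le_mul_pred hp hpk)
      _ ≤ |c| := hgap

theorem stmt1 (c α y ε : ℤ) (d p : ℕ) (hc : c ≠ 0) (hd : 3 ≤ d)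
    (hp : p.Prime) (hpd : p ∣ d) (hε : ε = 1 ∨ ε = -1)
    (h : α ^ d + c = ε * y ^ p) :
    (|α| : ℝ) ≤ Real.sqrt |(c : ℝ)| := by
  obtain ⟨k, rfl⟩ := hpd
  have hu : |ε * y ^ p| = |y| ^ p := by
    rcases hε with rfl | rfl <;> simp [abs_pow]
  have key : α ^ 2 ≤ |c| := sq_le_abs_of_pow_add_eq hc hp.two_le hd (abs_nonneg y) hu h
  rw [Real.le_sqrt (abs_nonneg _) (abs_nonneg _), sq_abs]
  exact_mod_cast key
end

section
/- Let f(x) = x^d + c with c a real number, d ≥ 3 an integer, |c| ≥ 2, and set ρ = |c|^{1/d}. If β is a real number with ||β| − ρ| ≥ 1, then |f^n(β)| > ρ^{d−1} > √|c| for all n ≥ 1, where f^n denotes the n-th iterate of f. -/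
/-!
With `ρ ^ d = |c|` and `K = ρ ^ (d - 1)`, the region `K < |x|` is forward invariant under
`f x = x ^ d + c`: there `|f x| ≥ |x| ^ d - |c| > K ^ d - |c| = |c| ^ (d - 1) - |c| ≥ |c| > K`,
using `d ≥ 3` and `|c| ≥ 2`. The hypothesis `||β| - ρ| ≥ 1` places `f β` in that region,
whether `|β| ≥ ρ + 1` (then `|β| ^ d` dominates `|c|`) or `|β| ≤ ρ - 1` (then `|c|`
dominates `|β| ^ d`). Finally `K ^ 2 = ρ ^ (2d - 2) > ρ ^ d = |c|`.
-/

section Escape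

variable {ρ : ℝ} {d : ℕ}

lemma sqrt_pow_lt_pow_pred (hρ : 1 < ρ) (hd : 3 ≤ d) : √(ρ ^ d) < ρ ^ (d - 1) := by
  rw [Real.sqrt_lt' (by positivity), ← pow_mul]
  exact pow_lt_pow_right₀ hρ (by omega)

lemma pow_pred_add_pow_lt_add_one_pow (hρ : 0 ≤ ρ) (hd : 2 ≤ d) :
    ρ ^ (d - 1) + ρ ^ d < (ρ + 1) ^ d := calc
  ρ ^ (d - 1) + ρ ^ d = ρ ^ (d - 1) * (ρ + 1) := by
    rw [mul_add_one, pow_sub_one_mul (by omega), add_comm]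
  _ < (ρ + 1) ^ (d - 1) * (ρ + 1) := by
    gcongr
    · omega
    · linarith
  _ = (ρ + 1) ^ d := pow_sub_one_mul (by omega) _

lemma sub_one_pow_add_pow_pred_lt_pow (hρ : 1 < ρ) (hd : 2 ≤ d) :
    (ρ - 1) ^ d + ρ ^ (d - 1) < ρ ^ d := calc
  (ρ - 1) ^ d + ρ ^ (d - 1) = (ρ - 1) ^ (d - 1) * (ρ - 1) + ρ ^ (d - 1) := by
    rw [pow_sub_one_mul (by omega)]
  _ < ρ ^ (d - 1) * (ρ - 1) + ρ ^ (d - 1) := by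
    gcongr
    · omega
    · linarith
  _ = ρ ^ d := by rw [mul_sub_one, pow_sub_one_mul (by omega)]; ring

variable {c : ℝ}

lemma pow_pred_lt_abs_pow_add_of_add_one_le (hρ : 0 ≤ ρ) (hρc : ρ ^ d = |c|) (hd : 2 ≤ d)
    {x : ℝ} (hx : ρ + 1 ≤ |x|) : ρ ^ (d - 1) < |x ^ d + c| := calc
  ρ ^ (d - 1) < (ρ + 1) ^ d - |c| := by linarith [pow_pred_add_pow_lt_add_one_pow hρ hd]
  _ ≤ |x| ^ d - |c| := by gcongr
  _ ≤ |x ^ d + c| := by rw [← abs_pow]; exact abs_sub_abs_le_abs_add _ _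

lemma pow_pred_lt_abs_pow_add_of_le_sub_one (hρ : 1 < ρ) (hρc : ρ ^ d = |c|) (hd : 2 ≤ d)
    {x : ℝ} (hx : |x| ≤ ρ - 1) : ρ ^ (d - 1) < |x ^ d + c| := calc
  ρ ^ (d - 1) < |c| - (ρ - 1) ^ d := by linarith [sub_one_pow_add_pow_pred_lt_pow hρ hd]
  _ ≤ |c| - |x| ^ d := by gcongr
  _ ≤ |x ^ d + c| := by rw [← abs_pow, add_comm]; exact abs_sub_abs_le_abs_add _ _

lemma pow_pred_lt_abs_pow_add (hρ : 1 < ρ) (hρc : ρ ^ d = |c|) (hd : 2 ≤ d)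
    {x : ℝ} (hx : 1 ≤ |(|x| - ρ)|) : ρ ^ (d - 1) < |x ^ d + c| := by
  rcases le_abs'.mp hx with hx | hx
  · exact pow_pred_lt_abs_pow_add_of_le_sub_one hρ hρc hd (by linarith)
  · exact pow_pred_lt_abs_pow_add_of_add_one_le (by linarith) hρc hd (by linarith)

lemma mapsTo_pow_add_setOf_pow_pred_lt_abs (hρ : 1 < ρ) (hρc : ρ ^ d = |c|) (hd : 3 ≤ d)
    (hc : 2 ≤ |c|) :
    Set.MapsTo (fun x : ℝ => x ^ d + c) {x | ρ ^ (d - 1) < |x|} {x | ρ ^ (d - 1) < |x|} := by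
  intro x (hx : ρ ^ (d - 1) < |x|)
  have hK : ρ ^ (d - 1) < |c| := by
    rw [← hρc]; exact pow_lt_pow_right₀ hρ (by omega)
  have hKd : (ρ ^ (d - 1)) ^ d = |c| ^ (d - 1) := by rw [← pow_mul, mul_comm, pow_mul, hρc]
  show ρ ^ (d - 1) < |x ^ d + c|
  calc ρ ^ (d - 1) < |c| ^ 2 - |c| := by nlinarith
    _ ≤ |c| ^ (d - 1) - |c| := by gcongr; linarith; omega
    _ < |x| ^ d - |c| := by rw [← hKd]; gcongr
    _ ≤ |x ^ d + c| := by rw [← abs_pow]; exact abs_sub_abs_le_abs_add _ _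

end Escape

theorem stmt3 (c : ℝ) (d : ℕ) (hd : 3 ≤ d) (hc : 2 ≤ |c|)
    (β : ℝ) (hβ : 1 ≤ |(|β| - |c| ^ ((1 : ℝ) / d))|) :
    ∀ n : ℕ, 1 ≤ n →
      |(fun x : ℝ => x ^ d + c)^[n] β| > (|c| ^ ((1 : ℝ) / d)) ^ (d - 1) ∧
      (|c| ^ ((1 : ℝ) / d)) ^ (d - 1) > Real.sqrt |c| := by
  intro n hn
  set ρ := |c| ^ ((1 : ℝ) / d)
  have hρc : ρ ^ d = |c| := by
    simp only [ρ, one_div]; exact Real.rpow_inv_natCast_pow (abs_nonneg c) (by omega)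
  have hρ : 1 < ρ := (one_lt_pow_iff_of_nonneg (Real.rpow_nonneg (abs_nonneg c) _)
    (n := d) (by omega)).mp (by linarith)
  refine ⟨?_, hρc ▸ sqrt_pow_lt_pow_pred hρ hd⟩
  obtain ⟨m, rfl⟩ := Nat.exists_eq_add_of_le' hn
  rw [Function.iterate_succ_apply]
  exact (mapsTo_pow_add_setOf_pow_pred_lt_abs hρ hρc hd hc).iterate m
    (pow_pred_lt_abs_pow_add hρ hρc (by omega) hβ)
end

section
/- Let f(x) = x^2 + c with c a real number, |c| ≥ 3, and set ρ = √|c|. If β is a real number with ||β| − ρ| ≥ 1, then |f^n(β)| > |c| for all n ≥ 2, where f^n denotes the n-th iterate of f. -/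
/-!
Write ρ = √|c|, so that |x² + c| ≥ |x² - ρ²|. The hypothesis on β puts |β| at distance at least 1
from ρ, which gives |f β| ≥ 2ρ - 1. For ρ ≥ √3 we have (2ρ - 1)² - ρ² > ρ², so any x with
|x| ≥ 2ρ - 1 satisfies |f x| > |c|; since |c| = ρ² ≥ 2ρ - 1, the region |x| > |c| is then
forward invariant under f.
-/

open Function Set

lemma abs_sq_sub_abs_le_abs_sq_add (x c : ℝ) : |(x ^ 2 - |c|)| ≤ |x ^ 2 + c| := by
  have h := abs_abs_sub_abs_le_abs_sub (x ^ 2) (-c)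
  rwa [abs_of_nonneg (sq_nonneg x), abs_neg, sub_neg_eq_add] at h

lemma two_mul_sqrt_abs_sub_one_le_abs_sq_add {c β : ℝ} (hβ : 1 ≤ |(|β| - √|c|)|) :
    2 * √|c| - 1 ≤ |β ^ 2 + c| := by
  have hρ : √|c| ^ 2 = |c| := Real.sq_sqrt (abs_nonneg c)
  have hβ_sq : |β| ^ 2 = β ^ 2 := sq_abs β
  refine le_trans ?_ (abs_sq_sub_abs_le_abs_sq_add β c)
  rcases le_abs'.mp hβ with hβ_small | hβ_large
  · rw [abs_sub_comm]
    refine le_trans ?_ (le_abs_self _)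
    nlinarith [abs_nonneg β]
  · refine le_trans ?_ (le_abs_self _)
    nlinarith [Real.sqrt_nonneg |c|]

lemma abs_lt_abs_sq_add_of_two_mul_sqrt_abs_sub_one_le {c x : ℝ} (hc : 3 ≤ |c|)
    (hx : 2 * √|c| - 1 ≤ |x|) : |c| < |x ^ 2 + c| := by
  set ρ := √|c|
  have hρ : ρ ^ 2 = |c| := Real.sq_sqrt (abs_nonneg c)
  have hρ_pos : 0 ≤ 2 * ρ - 1 := by nlinarith [Real.sqrt_nonneg |c|]
  have hx_sq : (2 * ρ - 1) ^ 2 ≤ x ^ 2 := by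
    rw [← sq_abs x]
    exact pow_le_pow_left₀ hρ_pos hx 2
  -- (2ρ - 1)² - 2ρ² = 2ρ² - 4ρ + 1 > 0 once ρ² ≥ 3
  have h_gap : 2 * |c| < x ^ 2 := by nlinarith [Real.sqrt_nonneg |c|]
  calc |c| < x ^ 2 - |c| := by linarith
    _ ≤ |(x ^ 2 - |c|)| := le_abs_self _
    _ ≤ |x ^ 2 + c| := abs_sq_sub_abs_le_abs_sq_add x c

lemma mapsTo_sq_add_abs_gt {c : ℝ} (hc : 3 ≤ |c|) :
    MapsTo (fun x : ℝ => x ^ 2 + c) {x | |c| < |x|} {x | |c| < |x|} := by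
  intro x hx
  refine abs_lt_abs_sq_add_of_two_mul_sqrt_abs_sub_one_le hc (le_trans ?_ hx.le)
  have hρ : √|c| ^ 2 = |c| := Real.sq_sqrt (abs_nonneg c)
  nlinarith [sq_nonneg (√|c| - 1)]

theorem stmt4 (c : ℝ) (hc : 3 ≤ |c|) (β : ℝ)
    (hβ : 1 ≤ |(|β| - Real.sqrt |c|)|) :
    ∀ n : ℕ, 2 ≤ n → |(fun x : ℝ => x ^ 2 + c)^[n] β| > |c| := by
  intro n hn
  obtain ⟨m, rfl⟩ : ∃ m, n = m + 2 := ⟨n - 2, by omega⟩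
  have h_second : |c| < |(β ^ 2 + c) ^ 2 + c| :=
    abs_lt_abs_sq_add_of_two_mul_sqrt_abs_sub_one_le hc
      (two_mul_sqrt_abs_sub_one_le_abs_sq_add hβ)
  rw [iterate_add_apply]
  exact (mapsTo_sq_add_abs_gt hc).iterate m h_second
end

section
/- Let f(x) = x^d + c with c a nonzero integer and d ≥ 3 odd. If f^3(α) = ε·y^p for some integers α, y, some prime p | d, and some ε = ±1, then α = ε·y^p and ε·y^p is a fixed point of f. -/
/-!
Write `d = m p`, `w = f α` and `z = f w`. The equation `f z = ε y ^ p` says `(ε y) ^ p - (z ^ m) ^ p = c`,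
and distinct odd powers `a ^ k ≠ b ^ k` differ by at least `max |a| |b| ^ (k - 1)`, so `z ^ 2 ≤ |c|`.
If `α` is not fixed, the same estimate for `d`-th powers gives `|z - w| = |α ^ d - w ^ d| ≥ M ^ (d - 1)`
with `M = max |α| |w|`, while `|c| ≤ M ^ d + M`; this contradicts `z ^ 2 ≤ |c|` except for `|α|, |w| ≤ 2`,
where a direct check leaves only `α = ∓1`, `c = ±1`. There `f^[3] α = ±2`, which is not `±` a `p`-th power.
-/

lemma Int.pow_pred_le_pow_sub_pow {a b : ℤ} (hb : 0 ≤ b) (hba : b < a) {k : ℕ} (hk : k ≠ 0) :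
    a ^ (k - 1) ≤ a ^ k - b ^ k := by
  have ha : 0 ≤ a := hb.trans hba.le
  have hterm : a ^ (k - 1) ≤ ∑ i ∈ Finset.range k, a ^ i * b ^ (k - 1 - i) := by
    simpa using Finset.single_le_sum (f := fun i => a ^ i * b ^ (k - 1 - i))
      (fun i _ => by positivity) (Finset.mem_range.2 (Nat.sub_one_lt hk))
  rw [← geom_sum₂_mul]
  exact hterm.trans (le_mul_of_one_le_right (by positivity) (by linarith))

lemma Odd.max_abs_pow_pred_le_abs_pow_sub_pow {k : ℕ} (hk : Odd k) {x y : ℤ} (hxy : x ≠ y) :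
    max |x| |y| ^ (k - 1) ≤ |x ^ k - y ^ k| := by
  wlog hyx : |y| ≤ |x| generalizing x y
  · simpa [max_comm, abs_sub_comm] using this hxy.symm (le_of_not_ge hyx)
  rw [max_eq_left hyx]
  rcases hyx.lt_or_eq with hlt | heq
  · calc |x| ^ (k - 1) ≤ |x| ^ k - |y| ^ k :=
          Int.pow_pred_le_pow_sub_pow (abs_nonneg y) hlt hk.pos.ne'
      _ = |x ^ k| - |y ^ k| := by rw [abs_pow, abs_pow]
      _ ≤ |x ^ k - y ^ k| := abs_sub_abs_le_abs_sub _ _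
  · obtain rfl : y = -x := (abs_eq_abs.1 heq).resolve_left hxy.symm
    have hx : x ≠ 0 := by rintro rfl; simp at hxy
    rw [hk.neg_pow, sub_neg_eq_add, ← two_mul, abs_mul, abs_pow]
    calc |x| ^ (k - 1) ≤ |x| ^ k := pow_le_pow_right₀ (Int.one_le_abs hx) (Nat.sub_le k 1)
      _ ≤ |2| * |x| ^ k := le_mul_of_one_le_left (by positivity) (by norm_num)

lemma sq_le_abs_of_pow_mul_add_eq_pow {p m : ℕ} (hp : Odd p) (hp3 : 3 ≤ p) (hm : m ≠ 0)
    {z u c : ℤ} (hc : c ≠ 0) (h : z ^ (m * p) + c = u ^ p) : z ^ 2 ≤ |c| := by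
  have hdiff : u ^ p - (z ^ m) ^ p = c := by rw [← pow_mul, ← h]; ring
  have hne : u ≠ z ^ m := by rintro rfl; simp at hdiff; exact hc hdiff.symm
  have hgap := hp.max_abs_pow_pred_le_abs_pow_sub_pow hne
  rw [hdiff] at hgap
  have hz : |z| ^ (m * (p - 1)) ≤ |c| := by
    calc |z| ^ (m * (p - 1)) = |z ^ m| ^ (p - 1) := by rw [abs_pow, pow_mul]
      _ ≤ max |u| |z ^ m| ^ (p - 1) := pow_le_pow_left₀ (abs_nonneg _) (le_max_right _ _) _
      _ ≤ |c| := hgap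
  rcases eq_or_ne z 0 with rfl | hz0
  · simp
  rw [← sq_abs]
  refine le_trans (pow_le_pow_right₀ (Int.one_le_abs hz0) ?_) hz
  exact (show 2 ≤ p - 1 by omega).trans (Nat.le_mul_of_pos_left _ (Nat.pos_of_ne_zero hm))

lemma Odd.pow_eq_self_of_abs_le_one {k : ℕ} (hk : Odd k) {x : ℤ} (hx : |x| ≤ 1) : x ^ k = x := by
  obtain ⟨h₁, h₂⟩ := abs_le.1 hx
  interval_cases x <;> simp [hk.neg_one_pow, hk.pos.ne']

-- For `|x| ≤ 1` every odd power equals the cube, so this also covers that case for all odd `d`.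
lemma cube_orbit_of_abs_le_two {x w : ℤ} (hx : |x| ≤ 2) (hw : |w| ≤ 2) (hxw : x ≠ w)
    (h : (w ^ 3 + (w - x ^ 3)) ^ 2 ≤ |w - x ^ 3|) : (x = -1 ∧ w = 0) ∨ (x = 1 ∧ w = 0) := by
  obtain ⟨hx₁, hx₂⟩ := abs_le.1 hx
  obtain ⟨hw₁, hw₂⟩ := abs_le.1 hw
  revert h hxw
  interval_cases x <;> interval_cases w <;> decide

lemma three_mul_le_pow_pred {d : ℕ} (hd : 3 ≤ d) {M : ℤ} (hM : 1 < M) (hM3 : d = 3 → 2 < M) :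
    3 * M ≤ M ^ (d - 1) := by
  have h3 : 3 ≤ M ^ (d - 2) := by
    rcases hd.eq_or_lt with rfl | hd4
    · simpa using Int.add_one_le_iff.2 (hM3 rfl)
    · calc 3 ≤ M ^ 2 := by nlinarith
        _ ≤ M ^ (d - 2) := pow_le_pow_right₀ (by linarith) (by omega)
  have : M ^ (d - 1) = M * M ^ (d - 2) := by rw [← pow_succ']; congr 1; omega
  nlinarith

lemma eq_neg_one_or_one_of_sq_iterate_le {d : ℕ} (hd : 3 ≤ d) (hodd : Odd d) {x c : ℤ}
    (hx : x ≠ x ^ d + c) (h : ((x ^ d + c) ^ d + c) ^ 2 ≤ |c|) :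
    (x = -1 ∧ c = 1) ∨ (x = 1 ∧ c = -1) := by
  set w := x ^ d + c with hw
  set z := w ^ d + c with hz
  set M := max |x| |w|
  have hxM : |x| ≤ M := le_max_left _ _
  have hwM : |w| ≤ M := le_max_right _ _
  by_cases hsmall : M ≤ 1 ∨ (d = 3 ∧ M ≤ 2)
  · have hpow : x ^ d = x ^ 3 ∧ w ^ d = w ^ 3 := by
      rcases hsmall with hM1 | ⟨rfl, -⟩
      · have h3 : Odd 3 := by decide
        rw [hodd.pow_eq_self_of_abs_le_one (hxM.trans hM1), h3.pow_eq_self_of_abs_le_one (hxM.trans hM1),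
          hodd.pow_eq_self_of_abs_le_one (hwM.trans hM1), h3.pow_eq_self_of_abs_le_one (hwM.trans hM1)]
        exact ⟨rfl, rfl⟩
      · exact ⟨rfl, rfl⟩
    have hc : c = w - x ^ 3 := by rw [hw, hpow.1]; ring
    have hM2 : M ≤ 2 := by omega
    rw [hz, hpow.2, hc] at h
    rcases cube_orbit_of_abs_le_two (hxM.trans hM2) (hwM.trans hM2) hx h with ⟨rfl, hw0⟩ | ⟨rfl, hw0⟩
    · simp [hc, hw0]
    · simp [hc, hw0]
  · exfalso
    push Not at hsmall
    have hgap : M ^ (d - 1) ≤ |w - z| := by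
      have := hodd.max_abs_pow_pred_le_abs_pow_sub_pow hx
      rwa [show x ^ d - w ^ d = w - z by rw [hz, hw]; ring] at this
    have hzM : M ^ (d - 1) - M ≤ |z| := by linarith [abs_sub w z]
    have hpow_succ : M ^ d = M * M ^ (d - 1) := by rw [← pow_succ']; congr 1; omega
    have hcM : |c| ≤ M * M ^ (d - 1) + M := by
      have : |c| ≤ |w| + |x| ^ d := by
        rw [← abs_pow, show c = w - x ^ d by rw [hw]; ring]; exact abs_sub _ _
      have : |x| ^ d ≤ M ^ d := pow_le_pow_left₀ (abs_nonneg _) hxM _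
      linarith
    have h3M := three_mul_le_pow_pred hd hsmall.1 hsmall.2
    have hz2 : (M ^ (d - 1) - M) ^ 2 ≤ z ^ 2 := by
      rw [← sq_abs z]; exact pow_le_pow_left₀ (by linarith) hzM 2
    -- with `X = M ^ (d - 1)`: `(X - M) ^ 2 - (M X + M) = X (X - 3 M) + M (M - 1) > 0`
    nlinarith

lemma Int.abs_pow_ne_two {p : ℕ} (hp : p ≠ 1) (u : ℤ) : |u ^ p| ≠ 2 := by
  intro h
  have : u.natAbs ^ p = 2 := by
    rw [← Int.natAbs_pow]; exact_mod_cast (Int.abs_eq_natAbs _).symm.trans h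
  exact hp ((Nat.prime_two.pow_eq_iff.1 this).2)

theorem stmt7 (c : ℤ) (d : ℕ) (hc : c ≠ 0) (hd : 3 ≤ d) (hodd : Odd d)
    (α y ε : ℤ) (p : ℕ) (hp : p.Prime) (hpd : p ∣ d) (hε : ε = 1 ∨ ε = -1)
    (h : (fun x : ℤ => x ^ d + c)^[3] α = ε * y ^ p) :
    α = ε * y ^ p ∧ (ε * y ^ p) ^ d + c = ε * y ^ p := by
  have hp_odd : Odd p := hodd.of_dvd_nat hpd
  have hp3 : 3 ≤ p := by obtain ⟨k, rfl⟩ := hp_odd; have := hp.two_le; omega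
  obtain ⟨m, hm⟩ := hpd
  have hm0 : m ≠ 0 := by rintro rfl; simp at hm; omega
  have hεy : ε * y ^ p = (ε * y) ^ p := by rcases hε with rfl | rfl <;> simp [hp_odd.neg_pow]
  simp only [Function.iterate_succ_apply', Function.iterate_zero_apply] at h
  have hz : ((α ^ d + c) ^ d + c) ^ 2 ≤ |c| :=
    sq_le_abs_of_pow_mul_add_eq_pow hp_odd hp3 hm0 hc (by rw [mul_comm, ← hm, h, hεy])
  by_cases hfix : α = α ^ d + c
  · rw [← hfix, ← hfix, ← hfix] at h
    exact ⟨h, h ▸ hfix.symm⟩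
  · rw [hεy] at h
    have hd0 : d ≠ 0 := by omega
    rcases eq_neg_one_or_one_of_sq_iterate_le hd hodd hfix hz with ⟨rfl, rfl⟩ | ⟨rfl, rfl⟩ <;>
      exfalso <;> apply Int.abs_pow_ne_two hp.ne_one (ε * y) <;>
      simp [← h, hodd.neg_one_pow, hd0]
end

section
/- Let f(x) = x^d + c with c an integer, c ∉ {0, −1}, and d ≥ 4 even. If f^3(α) = ε·y^p for some integers α, y, some prime p | d, and some ε = ±1, then α = ε·y^p or α = −ε·y^p, and ε·y^p is a fixed point of f. -/
/-!
Put `f x = x ^ d + c`, `b = f α`, `e = f b` and `d = p * k`; here `k ≥ 2`, since an even prime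
cannot equal `d ≥ 4`. As `f e = (|e| ^ k) ^ p + c = ±y ^ p`, and distinct `p`-th powers of
`z, w ≥ 0` differ by at least `w ^ (p - 1)`, we get `e ^ 2 ≤ |e| ^ k ≤ |c|`. This is impossible
for `c > 0` because `e ≥ c`. For `c < 0` and `|α| ≠ |b|` the same gap bound gives
`|b| ^ (d - 1) ≤ |α ^ d - b ^ d| = |b - e|`, so `|e|` is of size `|b| ^ (d - 1)`, contradicting
`e ^ 2 ≤ -c = b ^ d - e` once `|b| ≥ 2`; the cases `|b| ≤ 1` are checked by hand.
Hence `|α| = |b|`, so `f b = b`, and `f^[3] α = b` is a fixed point with `α = ±b`.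
-/

theorem pow_mul_sub_le_pow_succ_sub_pow_succ {R : Type*} [CommRing R] [LinearOrder R]
    [IsStrictOrderedRing R] {a b : R} (ha : 0 ≤ a) (hab : a ≤ b) (n : ℕ) :
    b ^ n * (b - a) ≤ b ^ (n + 1) - a ^ (n + 1) := by
  have : a * a ^ n ≤ a * b ^ n := mul_le_mul_of_nonneg_left (pow_le_pow_left₀ ha hab n) ha
  rw [pow_succ, pow_succ]
  linarith

namespace Int

theorem pow_le_pow_right_of_nonneg {x : ℤ} (hx : 0 ≤ x) {m n : ℕ} (hm : m ≠ 0) (hmn : m ≤ n) :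
    x ^ m ≤ x ^ n := by
  rcases hx.eq_or_lt with rfl | hx
  · rw [zero_pow hm, zero_pow (by omega)]
  · exact pow_le_pow_right₀ (by omega) hmn

theorem pow_le_abs_pow_succ_sub_pow_succ {a b : ℤ} (ha : 0 ≤ a) (hb : 0 ≤ b) (hab : a ≠ b)
    (n : ℕ) : b ^ n ≤ |a ^ (n + 1) - b ^ (n + 1)| := by
  rcases hab.lt_or_gt with hlt | hgt
  · have := pow_mul_sub_le_pow_succ_sub_pow_succ ha hlt.le n
    rw [abs_sub_comm]
    nlinarith [le_abs_self (b ^ (n + 1) - a ^ (n + 1)), pow_nonneg hb n]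
  · have := pow_mul_sub_le_pow_succ_sub_pow_succ hb hgt.le n
    nlinarith [le_abs_self (a ^ (n + 1) - b ^ (n + 1)), pow_le_pow_left₀ hb hgt.le n,
      pow_nonneg ha n]

theorem le_abs_of_abs_pow_add_eq_pow {w c z : ℤ} {p : ℕ} (hw : 0 ≤ w) (hz : 0 ≤ z) (hp : 2 ≤ p)
    (hc : c ≠ 0) (h : |w ^ p + c| = z ^ p) : w ≤ |c| := by
  obtain ⟨n, rfl⟩ : ∃ n, p = n + 1 := ⟨p - 1, by omega⟩
  have hw_le : w ≤ w ^ n := by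
    simpa using pow_le_pow_right_of_nonneg hw one_ne_zero (show 1 ≤ n by omega)
  rcases le_or_gt 0 (w ^ (n + 1) + c) with hpos | hneg
  · rw [abs_of_nonneg hpos] at h
    have hzw : z ≠ w := by rintro rfl; omega
    have hgap := pow_le_abs_pow_succ_sub_pow_succ hz hw hzw n
    rw [← h, add_sub_cancel_left] at hgap
    exact hw_le.trans hgap
  · rw [abs_of_neg hneg] at h
    rw [abs_of_neg (by linarith [pow_nonneg hw (n + 1)])]
    linarith [pow_nonneg hz (n + 1),
      pow_le_pow_right_of_nonneg hw one_ne_zero (by omega : 1 ≤ n + 1)]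

theorem sq_le_abs_of_abs_pow_add_eq_pow {x c y : ℤ} {d p : ℕ} (heven : Even d) (hp : 2 ≤ p)
    (hpd : p ∣ d) (hpd' : p < d) (hc : c ≠ 0) (h : |x ^ d + c| = |y| ^ p) : x ^ 2 ≤ |c| := by
  obtain ⟨k, rfl⟩ := hpd
  have hk : 2 ≤ k := by
    by_contra! hk
    interval_cases k <;> omega
  have hw : (|x| ^ k) ^ p = x ^ (p * k) := by rw [← pow_mul, mul_comm, heven.pow_abs]
  rw [← hw] at h
  calc x ^ 2 = |x| ^ 2 := (sq_abs x).symm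
    _ ≤ |x| ^ k := pow_le_pow_right_of_nonneg (abs_nonneg x) two_ne_zero hk
    _ ≤ |c| := le_abs_of_abs_pow_add_eq_pow (by positivity) (abs_nonneg y) hp hc h

theorem lt_sq_sub_self_of_le {X B E : ℤ} (hB : 0 < B) (hX : 4 * B ≤ X) (hE : X - B ≤ E) :
    X * B < E ^ 2 - E := by
  have hprod : (X - B) * (X - B - 1) ≤ E * (E - 1) :=
    mul_le_mul hE (by omega) (by omega) (by omega)
  nlinarith

variable {c α : ℤ} {d : ℕ}

theorem abs_pow_add_le_one_of_sq_le (heven : Even d) (hd : 4 ≤ d) (hne : |α| ≠ |α ^ d + c|)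
    (h : ((α ^ d + c) ^ d + c) ^ 2 ≤ -c) : |α ^ d + c| ≤ 1 := by
  set b := α ^ d + c with hb
  set e := b ^ d + c with he
  by_contra! hb1
  obtain ⟨m, rfl⟩ : ∃ m, d = m + 1 := ⟨d - 1, by omega⟩
  have hgap := pow_le_abs_pow_succ_sub_pow_succ (abs_nonneg α) (abs_nonneg b) hne m
  rw [heven.pow_abs, heven.pow_abs, show α ^ (m + 1) - b ^ (m + 1) = b - e by rw [hb, he]; ring]
    at hgap
  have hX : 4 * |b| ≤ |b| ^ m :=
    calc 4 * |b| ≤ |b| ^ 2 * |b| := by nlinarith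
      _ = |b| ^ 3 := by ring
      _ ≤ |b| ^ m := pow_le_pow_right₀ (by omega) (by omega)
  have hlt := lt_sq_sub_self_of_le (by omega) hX (E := |e|) (by linarith [abs_sub b e])
  have hbd : b ^ (m + 1) = |b| ^ m * |b| := by rw [← heven.pow_abs, pow_succ]
  nlinarith [sq_abs e, neg_abs_le e]

theorem abs_eq_abs_of_abs_pow_add_le_one (heven : Even d) (hd : 4 ≤ d) (hc : c < 0)
    (hc' : c ≠ -1) (hb : |α ^ d + c| ≤ 1) (h : ((α ^ d + c) ^ d + c) ^ 2 ≤ -c) :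
    |α| = |α ^ d + c| := by
  set b := α ^ d + c with hb_def
  have hc_le : c ≤ -2 := by omega
  obtain ⟨hb_lo, hb_hi⟩ := abs_le.mp hb
  obtain hb0 | hb1 : |b| = 0 ∨ |b| = 1 := by have := abs_nonneg b; omega
  · rw [abs_eq_zero.mp hb0, zero_pow (by omega), zero_add] at h
    nlinarith
  · rw [← heven.pow_abs, hb1, one_pow] at h
    have hc_ge : -2 ≤ c := by nlinarith
    have hαd : α ^ d ≤ 3 := by omega
    have hα0 : α ≠ 0 := by rintro rfl; rw [zero_pow (by omega)] at hb_def; omega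
    have hα2 : |α| < 2 := by
      rw [← pow_lt_pow_iff_left₀ (abs_nonneg α) zero_le_two (n := d) (by omega), heven.pow_abs]
      linarith [pow_le_pow_right₀ (a := (2 : ℤ)) one_le_two hd]
    have := abs_pos.mpr hα0
    omega

theorem not_sq_iterate_le_of_pos (heven : Even d) (hd : d ≠ 0) (hc : 0 < c) :
    ¬ ((α ^ d + c) ^ d + c) ^ 2 ≤ c := by
  intro h
  have hα := heven.pow_nonneg α
  have hb := heven.pow_nonneg (α ^ d + c)
  have he : (α ^ d + c) ^ d + c = 1 := by nlinarith
  have hb0 : α ^ d + c = 0 := pow_eq_zero_iff hd |>.mp (by nlinarith)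
  omega

theorem abs_eq_abs_pow_add_of_sq_le (heven : Even d) (hd : 4 ≤ d) (hc : c ≠ 0) (hc' : c ≠ -1)
    (h : ((α ^ d + c) ^ d + c) ^ 2 ≤ |c|) : |α| = |α ^ d + c| := by
  rcases hc.lt_or_gt with hneg | hpos
  · rw [abs_of_neg hneg] at h
    by_contra hne
    exact hne (abs_eq_abs_of_abs_pow_add_le_one heven hd hneg hc'
      (abs_pow_add_le_one_of_sq_le heven hd hne h) h)
  · rw [abs_of_pos hpos] at h
    exact absurd h (not_sq_iterate_le_of_pos heven (by omega) hpos)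

end Int

theorem stmt8 (c : ℤ) (d : ℕ) (hc : c ≠ 0) (hc' : c ≠ -1) (hd : 4 ≤ d)
    (heven : Even d) (α y ε : ℤ) (p : ℕ) (hp : p.Prime) (hpd : p ∣ d)
    (hε : ε = 1 ∨ ε = -1)
    (h : (fun x : ℤ => x ^ d + c)^[3] α = ε * y ^ p) :
    (α = ε * y ^ p ∨ α = -(ε * y ^ p)) ∧ (ε * y ^ p) ^ d + c = ε * y ^ p := by
  have hpd' : p < d := (Nat.le_of_dvd (by omega) hpd).lt_of_ne fun hpd ↦ by
    have := hp.even_iff.mp (hpd ▸ heven)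
    omega
  simp only [Function.iterate_succ, Function.iterate_zero, Function.comp_apply, id] at h
  have hy : |((α ^ d + c) ^ d + c) ^ d + c| = |y| ^ p := by
    rcases hε with rfl | rfl <;> simp [h, abs_pow]
  have hα := Int.abs_eq_abs_pow_add_of_sq_le heven hd hc hc'
    (Int.sq_le_abs_of_abs_pow_add_eq_pow heven hp.two_le hpd hpd' hc hy)
  have hfix : (α ^ d + c) ^ d + c = α ^ d + c := by rw [← heven.pow_abs, ← hα, heven.pow_abs]
  rw [hfix, hfix] at h
  rw [← h]
  exact ⟨abs_eq_abs.mp hα, hfix⟩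
end

section
/- Let f(x) = x^d − 1 with d ≥ 4 even. If f^3(α) = ε·y^p for some integers α, y, some prime p | d, and some ε = ±1, then α ∈ {0, 1, −1}, ε·y^p ∈ {0, −1}, and ε·y^p is a point of exact period 2 for f. -/
/-!
Write `f x = x ^ d - 1` and `b = f (f α)`, so `b ^ d - 1 = ± y ^ p`. Since `p ∣ d`, `b ^ d` is a
`p`-th power, and two positive `p`-th powers never differ by one; hence `b ^ d ≤ 1`. As `d` is even
and nonzero, a `d`-th power that is at most `2` has base in `{-1, 0, 1}`, and peeling off `f` twice
more forces `α` into `{-1, 0, 1}` and `f^[3] α` into `{-1, 0}`, the 2-cycle of `f`.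
-/

lemma Nat.pow_add_one_lt_add_one_pow {n p : ℕ} (hn : 0 < n) (hp : 2 ≤ p) :
    n ^ p + 1 < (n + 1) ^ p := by
  obtain ⟨q, rfl⟩ : ∃ q, p = q + 1 := ⟨p - 1, by omega⟩
  have hq : n ^ q + 1 ≤ (n + 1) ^ q := by
    simpa using pow_add_pow_le n.zero_le zero_le_one (by omega : q ≠ 0)
  calc n ^ (q + 1) + 1 < (n ^ q + 1) * (n + 1) := by
        rw [pow_succ]; nlinarith [Nat.pow_pos (n := q) hn]
    _ ≤ (n + 1) ^ q * (n + 1) := by gcongr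
    _ = (n + 1) ^ (q + 1) := (pow_succ _ _).symm

lemma Nat.pow_ne_pow_add_one {m n p : ℕ} (hn : 0 < n) (hp : 2 ≤ p) : m ^ p ≠ n ^ p + 1 := by
  intro h
  rcases le_or_gt m n with hmn | hnm
  · have := Nat.pow_le_pow_left hmn p
    omega
  · have := Nat.pow_le_pow_left (show n + 1 ≤ m from hnm) p
    have := Nat.pow_add_one_lt_add_one_pow hn hp
    omega

lemma Int.pow_le_one_of_abs_pow_sub_one_eq_abs_pow {u v : ℤ} {p : ℕ} (hp : 2 ≤ p)
    (h : |u ^ p - 1| = |v| ^ p) : u ^ p ≤ 1 := by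
  by_contra! hu
  have hv : v ≠ 0 := by
    rintro rfl
    rw [abs_zero, zero_pow (by omega), abs_of_pos (by omega)] at h
    omega
  have hsucc : |u| ^ p = |v| ^ p + 1 := by
    rw [← abs_pow, abs_of_pos (by omega), ← h, abs_of_pos (by omega)]
    ring
  apply Nat.pow_ne_pow_add_one (Int.natAbs_pos.mpr hv) hp (m := u.natAbs)
  zify
  exact hsucc

lemma Int.pow_le_one_of_abs_pow_sub_one_eq_abs_pow_of_dvd {b y : ℤ} {d p : ℕ} (hpd : p ∣ d)
    (hp : 2 ≤ p) (h : |b ^ d - 1| = |y| ^ p) : b ^ d ≤ 1 := by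
  obtain ⟨k, rfl⟩ := hpd
  rw [mul_comm, pow_mul] at h ⊢
  exact Int.pow_le_one_of_abs_pow_sub_one_eq_abs_pow hp h

lemma Int.abs_le_one_of_pow_le_two {t : ℤ} {d : ℕ} (heven : Even d) (hd : d ≠ 0)
    (h : t ^ d ≤ 2) : |t| ≤ 1 := by
  by_contra! ht
  have hd2 : 2 ≤ d := by obtain ⟨k, rfl⟩ := heven; omega
  have : (4 : ℤ) ≤ t ^ d :=
    calc (4 : ℤ) = 2 ^ 2 := by norm_num
      _ ≤ 2 ^ d := pow_le_pow_right₀ (by norm_num) hd2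
      _ ≤ |t| ^ d := pow_le_pow_left₀ (by norm_num) (by omega) d
      _ = t ^ d := heven.pow_abs t
  omega

theorem stmt9 (d : ℕ) (hd : 4 ≤ d) (heven : Even d)
    (α y ε : ℤ) (p : ℕ) (hp : p.Prime) (hpd : p ∣ d) (hε : ε = 1 ∨ ε = -1)
    (h : (fun x : ℤ => x ^ d - 1)^[3] α = ε * y ^ p) :
    (α = 0 ∨ α = 1 ∨ α = -1) ∧ (ε * y ^ p = 0 ∨ ε * y ^ p = -1) ∧
      ((fun x : ℤ => x ^ d - 1)^[2] (ε * y ^ p) = ε * y ^ p ∧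
        (ε * y ^ p) ^ d - 1 ≠ ε * y ^ p) := by
  have hd0 : d ≠ 0 := by omega
  simp only [Function.iterate_succ_apply', Function.iterate_zero_apply] at h ⊢
  have hsign : |ε * y ^ p| = |y| ^ p := by rcases hε with rfl | rfl <;> simp [abs_pow]
  have h₂ : ((α ^ d - 1) ^ d - 1) ^ d ≤ 1 :=
    Int.pow_le_one_of_abs_pow_sub_one_eq_abs_pow_of_dvd hpd hp.two_le (y := y) (by rw [h, hsign])
  have h₁ := abs_le.mp (Int.abs_le_one_of_pow_le_two heven hd0 (by linarith))
  have h₀ := abs_le.mp (Int.abs_le_one_of_pow_le_two heven hd0 (by linarith))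
  have hα := abs_le.mp (Int.abs_le_one_of_pow_le_two heven hd0 (by linarith))
  have hc : ε * y ^ p = 0 ∨ ε * y ^ p = -1 := by
    have := heven.pow_nonneg ((α ^ d - 1) ^ d - 1)
    omega
  refine ⟨by omega, hc, ?_⟩
  rcases hc with hc | hc <;> rw [hc] <;> simp [heven.neg_one_pow, hd0]
end

section
/- Let f(x) = x^2 + c with c a nonzero integer. If f^4(α) = ε·y^2 for some integers α, y and some ε = ±1, then α = ε·y^2 or α = −ε·y^2, and ε·y^2 is a fixed point of f or a point of exact period 2 for f. -/
/-!
Write `a₁ = f α`, `a₂ = f a₁`, `a₃ = f a₂`, so that `a₃ ^ 2 + c = ±y ^ 2`. For `c > 0` this forces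
`2 |a₃| < c ≤ a₃`, which is absurd; for `c < 0` it gives `2 |a₃| ≤ 1 - c`. Eliminating `c = a₂ - a₁ ^ 2`
turns `a₁ = α ^ 2 + c` into `α ^ 2 = a₁ ^ 2 + a₁ - a₂`. Since `a₁ ^ 2 + a₁` lies halfway between two
consecutive squares, either `α ^ 2` is one of them, which means `a₂ = a₁` or `a₂ = -a₁ - 1` and in both
cases `a₃ = a₁`, or `|2 a₂ + 5| ≥ 3 |2 a₁ + 1|`, which is incompatible with the bound on `a₃`. So `f α`
has period dividing `2`, and both claims follow.
-/

lemma two_mul_abs_lt_of_sq_add_eq {a c ε y : ℤ} (hc : 0 < c) (hε : ε = 1 ∨ ε = -1)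
    (h : a ^ 2 + c = ε * y ^ 2) : 2 * |a| < c := by
  obtain rfl : ε = 1 := hε.resolve_right fun hε ↦ by nlinarith [sq_nonneg a, sq_nonneg y]
  have hay : |a| < |y| := sq_lt_sq.mp (by linarith)
  nlinarith [sq_abs a, sq_abs y, abs_nonneg a]

lemma two_mul_abs_le_of_sq_add_eq {a c ε y : ℤ} (hc : c < 0) (hε : ε = 1 ∨ ε = -1)
    (h : a ^ 2 + c = ε * y ^ 2) : 2 * |a| ≤ 1 - c := by
  rcases hε with rfl | rfl
  · have hya : |y| < |a| := sq_lt_sq.mp (by linarith)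
    nlinarith [sq_abs a, sq_abs y, abs_nonneg y]
  · nlinarith [sq_abs a, sq_nonneg (|a| - 1), sq_nonneg y]

lemma sq_eq_sq_add_self_sub_cases_of_nonneg {a u v : ℤ} (hu : 0 ≤ u) (h : a ^ 2 = u ^ 2 + u - v) :
    v = u ∨ v = -u - 1 ∨ 3 * (2 * u + 1) ≤ |2 * v + 5| := by
  rw [← sq_abs] at h
  have ha := abs_nonneg a
  obtain hlt | heq | heq | hgt : |a| + 1 ≤ u ∨ |a| = u ∨ |a| = u + 1 ∨ u + 2 ≤ |a| := by omega
  · exact .inr <| .inr <| le_abs.mpr <| .inl <| by nlinarith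
  · exact .inl <| by rw [heq] at h; linarith
  · exact .inr <| .inl <| by rw [heq] at h; linarith
  · exact .inr <| .inr <| le_abs.mpr <| .inr <| by nlinarith

lemma sq_eq_sq_add_self_sub_cases {a u v : ℤ} (h : a ^ 2 = u ^ 2 + u - v) :
    v = u ∨ v = -u - 1 ∨ 3 * |2 * u + 1| ≤ |2 * v + 5| := by
  rcases le_or_gt 0 u with hu | hu
  · rw [abs_of_nonneg (by omega)]
    exact sq_eq_sq_add_self_sub_cases_of_nonneg hu h
  · -- `u ↦ -u - 1` preserves `u ^ 2 + u`
    have h' : a ^ 2 = (-u - 1) ^ 2 + (-u - 1) - v := by linear_combination h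
    rw [abs_of_neg (by omega)]
    rcases sq_eq_sq_add_self_sub_cases_of_nonneg (by omega) h' with h | h | h
    · exact .inr <| .inl h
    · exact .inl <| by linarith
    · exact .inr <| .inr <| by linarith

lemma sq_add_self_eq_of_abs_le {u v : ℤ} (h : 2 * |v ^ 2 + v - u ^ 2| ≤ u ^ 2 - v + 1)
    (huv : 3 * |2 * u + 1| ≤ |2 * v + 5|) : v ^ 2 + v = u ^ 2 + u := by
  have h₁ : 2 * (v ^ 2 + v - u ^ 2) ≤ u ^ 2 - v + 1 := by linarith [le_abs_self (v ^ 2 + v - u ^ 2)]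
  have h₂ : -(u ^ 2 - v + 1) ≤ 2 * (v ^ 2 + v - u ^ 2) := by linarith [neg_abs_le (v ^ 2 + v - u ^ 2)]
  have h₃ : (3 * (2 * u + 1)) ^ 2 ≤ (2 * v + 5) ^ 2 :=
    sq_le_sq.mpr (by rwa [abs_mul, abs_of_pos three_pos])
  clear h huv
  -- only `u, v ∈ {-1, 0}` survive, where both sides vanish
  have hu : u ^ 2 ≤ 3 ^ 2 := by nlinarith
  have hv : v ^ 2 ≤ 4 ^ 2 := by nlinarith
  obtain ⟨_, _⟩ := abs_le_of_sq_le_sq' hu (by norm_num)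
  obtain ⟨_, _⟩ := abs_le_of_sq_le_sq' hv (by norm_num)
  interval_cases u <;> interval_cases v <;> revert h₁ h₂ h₃ <;> norm_num

lemma sq_add_eq_of_two_mul_abs_le {c a₀ a₁ a₂ : ℤ} (h₁ : a₁ = a₀ ^ 2 + c) (h₂ : a₂ = a₁ ^ 2 + c)
    (h₃ : 2 * |a₂ ^ 2 + c| ≤ 1 - c) : a₂ ^ 2 + c = a₁ := by
  obtain rfl : c = a₂ - a₁ ^ 2 := by linarith
  suffices a₂ ^ 2 + a₂ = a₁ ^ 2 + a₁ by linarith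
  rcases sq_eq_sq_add_self_sub_cases (a := a₀) (u := a₁) (v := a₂) (by linarith) with rfl | rfl | h
  · rfl
  · ring
  · refine sq_add_self_eq_of_abs_le ?_ h
    convert h₃ using 3 <;> ring

theorem stmt10 (c : ℤ) (hc : c ≠ 0) (α y ε : ℤ) (hε : ε = 1 ∨ ε = -1)
    (h : (fun x : ℤ => x ^ 2 + c)^[4] α = ε * y ^ 2) :
    (α = ε * y ^ 2 ∨ α = -(ε * y ^ 2)) ∧
      ((ε * y ^ 2) ^ 2 + c = ε * y ^ 2 ∨
        ((fun x : ℤ => x ^ 2 + c)^[2] (ε * y ^ 2) = ε * y ^ 2 ∧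
          (ε * y ^ 2) ^ 2 + c ≠ ε * y ^ 2)) := by
  set f : ℤ → ℤ := fun x ↦ x ^ 2 + c
  set t := ε * y ^ 2
  have h₄ : f (f (f α)) ^ 2 + c = t := h
  have hneg : c < 0 := by
    refine hc.lt_or_gt.resolve_right fun hpos ↦ ?_
    have := two_mul_abs_lt_of_sq_add_eq hpos hε h₄
    have : c ≤ f (f (f α)) := le_add_of_nonneg_left (sq_nonneg _)
    linarith [le_abs_self (f (f (f α)))]
  have hper : Function.IsPeriodicPt f 2 (f α) :=
    sq_add_eq_of_two_mul_abs_le rfl rfl (two_mul_abs_le_of_sq_add_eq hneg hε h₄)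
  have ht : Function.IsPeriodicPt f 2 t := h ▸ hper.apply_iterate 3
  have hft : f (f^[4] α) = f α := hper.mul_const 2
  rw [h] at hft
  refine ⟨sq_eq_sq_iff_eq_or_eq_neg.mp (add_right_cancel hft).symm, ?_⟩
  by_cases hfix : t ^ 2 + c = t
  · exact .inl hfix
  · exact .inr ⟨ht, hfix⟩
end

section
/- Let K be a field of characteristic zero, w(x) ∈ K[x] monic and irreducible, and u(x) = x^d + c for some c ∈ K and d ≥ 2; if d is even, assume w has even degree. If the composition w(u(x)) is reducible over K, then w(u(0)) = y^p for some y ∈ K and some prime p dividing d. -/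
/-!
Write `d = p * m` with `p` prime. If `g = w(x^m + c)` is reducible, induct on `m`. Otherwise
`w(u) = g(x^p)`, and by Capelli's criterion (`Polynomial.irreducible_comp`) its reducibility
means that `x^p - α` is reducible over `K(α)` for a root `α` of `g`, i.e. `α = β^p` with
`β ∈ K(α)` (`X_pow_sub_C_irreducible_of_prime`). Taking norms, `(-1)^deg g * g(0) = N(β)^p`,
and the parity hypothesis makes the sign a `p`-th power, so `w(c) = g(0)` is a `p`-th power.
-/

open Polynomial IntermediateField

theorem Irreducible.comp_X_add_C {K : Type*} [Field K] {f : K[X]} (hf : Irreducible f) (c : K) :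
    Irreducible (f.comp (X + C c)) := by
  have hshift : f.comp (X + C c) = algEquivAevalXAddC c f := by
    simp [algEquivAevalXAddC, aeval_def, eval₂_eq_eval_map, comp]
  rw [hshift]
  exact (MulEquiv.irreducible_iff (algEquivAevalXAddC c : K[X] ≃ₐ[K] K[X])).mpr hf

theorem IntermediateField.AdjoinSimple.norm_gen_eq_neg_one_pow_mul_eval_zero {K E : Type*}
    [Field K] [Field E] [Algebra K E] {x : E} (hx : IsIntegral K x) :
    Algebra.norm K (AdjoinSimple.gen K x)
      = (-1) ^ (minpoly K x).natDegree * (minpoly K x).eval 0 := by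
  rw [← adjoin.powerBasis_gen hx, Algebra.PowerBasis.norm_gen_eq_coeff_zero_minpoly]
  simp [adjoin.powerBasis_gen, minpoly_gen, coeff_zero_eq_eval_zero]

namespace Polynomial

variable {K : Type*} [Field K]

theorem Monic.exists_pow_eq_eval_zero_of_not_irreducible_comp_X_pow {f : K[X]} (hmonic : f.Monic)
    (hirr : Irreducible f) {p : ℕ} (hp : p.Prime) (hsign : Even f.natDegree ∨ Odd p)
    (hred : ¬Irreducible (f.comp (X ^ p))) :
    ∃ y : K, f.eval 0 = y ^ p := by
  by_contra! hnot
  refine hred (irreducible_comp hmonic (monic_X_pow p) hirr fun E _ _ x hx ↦ ?_)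
  have hxint : IsIntegral K x := by
    by_contra h
    exact hirr.ne_zero (hx.symm.trans (minpoly.eq_zero h))
  rw [Polynomial.map_pow, map_X]
  refine X_pow_sub_C_irreducible_of_prime hp fun b hb ↦ ?_
  have hsign_pow : ((-1 : K) ^ f.natDegree) ^ p = (-1) ^ f.natDegree := by
    rcases hsign with h | h
    · rw [h.neg_one_pow, one_pow]
    · rw [← pow_mul, mul_comm, pow_mul, h.neg_one_pow]
  have hnorm : Algebra.norm K b ^ p = (-1) ^ f.natDegree * f.eval 0 := by
    rw [← map_pow, hb, AdjoinSimple.norm_gen_eq_neg_one_pow_mul_eval_zero hxint, hx]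
  apply hnot ((-1) ^ f.natDegree * Algebra.norm K b)
  rw [mul_pow, hsign_pow, hnorm, ← mul_assoc, ← mul_pow]
  simp

theorem comp_X_pow_add_C_comp_X_pow (w : K[X]) (c : K) (m p : ℕ) :
    (w.comp (X ^ m + C c)).comp (X ^ p) = w.comp (X ^ (p * m) + C c) := by
  rw [comp_assoc, add_comp, X_pow_comp, C_comp, ← pow_mul]

theorem Monic.exists_pow_eq_eval_of_not_irreducible_comp_X_pow_add_C {w : K[X]}
    (hmonic : w.Monic) (hirr : Irreducible w) (c : K) {d : ℕ} (hd : d ≠ 0)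
    (hdeg : Even d → Even w.natDegree) (hred : ¬Irreducible (w.comp (X ^ d + C c))) :
    ∃ (y : K) (p : ℕ), p.Prime ∧ p ∣ d ∧ w.eval c = y ^ p := by
  induction d using Nat.strong_induction_on with
  | _ d IH =>
  have hd1 : d ≠ 1 := by
    rintro rfl
    exact hred (by simpa using hirr.comp_X_add_C c)
  obtain ⟨p, hp, m, rfl⟩ := Nat.exists_prime_and_dvd hd1
  have hm : m ≠ 0 := right_ne_zero_of_mul hd
  by_cases hg : Irreducible (w.comp (X ^ m + C c))
  · have hgmonic : (w.comp (X ^ m + C c)).Monic :=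
      hmonic.comp (monic_X_pow_add_C c hm) (by rwa [natDegree_X_pow_add_C])
    have hgsign : Even (w.comp (X ^ m + C c)).natDegree ∨ Odd p := by
      rcases hp.eq_two_or_odd' with rfl | hodd
      · rw [natDegree_comp, natDegree_X_pow_add_C]
        exact .inl ((hdeg (even_two_mul m)).mul_right m)
      · exact .inr hodd
    obtain ⟨y, hy⟩ := hgmonic.exists_pow_eq_eval_zero_of_not_irreducible_comp_X_pow hg hp hgsign
      (by rwa [comp_X_pow_add_C_comp_X_pow])
    refine ⟨y, p, hp, dvd_mul_right p m, ?_⟩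
    simpa [eval_comp, zero_pow hm] using hy
  · have hmlt : m < p * m := lt_mul_left (Nat.pos_of_ne_zero hm) hp.one_lt
    obtain ⟨y, q, hq, hqm, hy⟩ :=
      IH m hmlt hm (fun hme ↦ hdeg (hme.mul_left p)) hg
    exact ⟨y, q, hq, hqm.mul_left p, hy⟩

end Polynomial

theorem stmt12_general (K : Type*) [Field K] (w : K[X])
    (hmonic : w.Monic) (hirr : Irreducible w) (c : K) (d : ℕ) (hd : 2 ≤ d)
    (hdeg : Even d → Even w.natDegree)
    (hred : ¬Irreducible (w.comp ((X : K[X]) ^ d + C c))) :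
    ∃ (y : K) (p : ℕ), p.Prime ∧ p ∣ d ∧
      w.eval ((0 : K) ^ d + c) = y ^ p := by
  rw [zero_pow (by omega), zero_add]
  exact hmonic.exists_pow_eq_eval_of_not_irreducible_comp_X_pow_add_C hirr c (by omega) hdeg hred

theorem stmt12 (K : Type*) [Field K] [CharZero K] (w : K[X])
    (hmonic : w.Monic) (hirr : Irreducible w) (c : K) (d : ℕ) (hd : 2 ≤ d)
    (hdeg : Even d → Even w.natDegree)
    (hred : ¬Irreducible (w.comp ((X : K[X]) ^ d + C c))) :
    ∃ (y : K) (p : ℕ), p.Prime ∧ p ∣ d ∧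
      w.eval ((0 : K) ^ d + c) = y ^ p :=
  stmt12_general K w hmonic hirr c d hd hdeg hred
end

section
/- Let K be a field of characteristic zero and d ≥ 2. If θ₁ ∘ ⋯ ∘ θₙ = τ₁ ∘ ⋯ ∘ τₘ where each θᵢ and τⱼ is a polynomial of the form x^d + b for some b ∈ K, then n = m and θᵢ = τᵢ for all i. In other words, the semigroup under composition generated by all polynomials x^d + c with c ∈ K is free. -/
/-!
Every composition `Q = (X^d + c₁) ∘ ⋯ ∘ (X^d + cₙ)` is monic of degree `d^n`, so equal
compositions have equal length, and peeling off the outer factor reduces the claim to: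
if `P^d + c = P'^d + c'` with `P, P'` monic of the same degree `N ≥ 1`, then `P = P'`.
Indeed, `P^d - P'^d = (∑ P^i P'^(d-1-i)) (P - P')`, and the first factor has coefficient
`d ≠ 0` in degree `N (d - 1) ≥ 1`, so for `P ≠ P'` the product is not a constant.
-/

open Polynomial

noncomputable def composeXPowAddC {R : Type*} [CommRing R] (d : ℕ) (l : List R) : R[X] :=
  (l.map fun c => (X : R[X]) ^ d + C c).foldr (·.comp ·) X

section Degree

variable {R : Type*} [CommRing R] {d : ℕ}

@[simp]
theorem composeXPowAddC_nil (d : ℕ) : composeXPowAddC d ([] : List R) = X := rfl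

@[simp]
theorem composeXPowAddC_cons (d : ℕ) (c : R) (l : List R) :
    composeXPowAddC d (c :: l) = composeXPowAddC d l ^ d + C c := by
  simp [composeXPowAddC]

variable [Nontrivial R]

theorem monic_composeXPowAddC_and_natDegree (hd : d ≠ 0) (l : List R) :
    (composeXPowAddC d l).Monic ∧ (composeXPowAddC d l).natDegree = d ^ l.length := by
  induction l with
  | nil => simp [monic_X]
  | cons c l ih =>
    obtain ⟨hmonic, hdeg⟩ := ih
    have hpow_deg : (composeXPowAddC d l ^ d).natDegree = d ^ (l.length + 1) := by
      rw [hmonic.natDegree_pow, hdeg, pow_succ']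
    have hpow_pos : 0 < (composeXPowAddC d l ^ d).natDegree := by
      rw [hpow_deg]; positivity
    rw [composeXPowAddC_cons, natDegree_add_C, hpow_deg, List.length_cons]
    refine ⟨(hmonic.pow d).add_of_left ?_, rfl⟩
    exact degree_C_le.trans_lt <| by
      rw [degree_eq_natDegree (hmonic.pow d).ne_zero]; exact_mod_cast hpow_pos

theorem monic_composeXPowAddC (hd : d ≠ 0) (l : List R) : (composeXPowAddC d l).Monic :=
  (monic_composeXPowAddC_and_natDegree hd l).1

theorem natDegree_composeXPowAddC (hd : d ≠ 0) (l : List R) :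
    (composeXPowAddC d l).natDegree = d ^ l.length :=
  (monic_composeXPowAddC_and_natDegree hd l).2

theorem length_eq_of_composeXPowAddC_eq (hd : 2 ≤ d) {l₁ l₂ : List R}
    (h : composeXPowAddC d l₁ = composeXPowAddC d l₂) : l₁.length = l₂.length :=
  Nat.pow_right_injective hd <| by
    simp only [← natDegree_composeXPowAddC (by omega : d ≠ 0), h]

end Degree

section Cancel

variable {R : Type*} [CommRing R]

theorem coeff_geom_sum₂_of_monic {Q Q' : R[X]} (hQ : Q.Monic) (hQ' : Q'.Monic)
    (hdeg : Q.natDegree = Q'.natDegree) (d : ℕ) :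
    (∑ i ∈ Finset.range d, Q ^ i * Q' ^ (d - 1 - i)).coeff (Q.natDegree * (d - 1)) = d := by
  have hterm : ∀ i ∈ Finset.range d,
      (Q ^ i * Q' ^ (d - 1 - i)).coeff (Q.natDegree * (d - 1)) = 1 := by
    intro i hi
    have hi : i ≤ d - 1 := by have := Finset.mem_range.mp hi; omega
    have hmonic : (Q ^ i * Q' ^ (d - 1 - i)).Monic := (hQ.pow i).mul (hQ'.pow _)
    have hterm_deg : (Q ^ i * Q' ^ (d - 1 - i)).natDegree = Q.natDegree * (d - 1) := by
      rw [(hQ.pow i).natDegree_mul (hQ'.pow _), hQ.natDegree_pow, hQ'.natDegree_pow, ← hdeg,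
        ← add_mul, Nat.add_sub_cancel' hi, mul_comm]
    rw [← hterm_deg, hmonic.coeff_natDegree]
  rw [finsetSum_coeff, Finset.sum_congr rfl hterm]
  simp

variable [IsDomain R] [CharZero R] {d : ℕ}

theorem eq_and_eq_of_pow_add_C_eq (hd : 2 ≤ d) {Q Q' : R[X]} (hQ : Q.Monic) (hQ' : Q'.Monic)
    (hpos : 0 < Q.natDegree) (hdeg : Q.natDegree = Q'.natDegree) {c c' : R}
    (h : Q ^ d + C c = Q' ^ d + C c') : Q = Q' ∧ c = c' := by
  suffices hQQ' : Q = Q' by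
    subst hQQ'
    exact ⟨rfl, C_injective (add_left_cancel h)⟩
  by_contra hne
  set S := ∑ i ∈ Finset.range d, Q ^ i * Q' ^ (d - 1 - i)
  have hS_coeff : S.coeff (Q.natDegree * (d - 1)) ≠ 0 := by
    rw [coeff_geom_sum₂_of_monic hQ hQ' hdeg]
    exact Nat.cast_ne_zero.mpr (by omega)
  have hS_ne : S ≠ 0 := fun h0 => hS_coeff (by rw [h0, coeff_zero])
  have hS_deg : Q.natDegree * (d - 1) ≤ S.natDegree := le_natDegree_of_ne_zero hS_coeff
  have hconst : S * (Q - Q') = C (c' - c) := by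
    rw [geom_sum₂_mul, C_sub]
    linear_combination h
  have hdeg_sum : S.natDegree + (Q - Q').natDegree = 0 := by
    rw [← natDegree_mul hS_ne (sub_ne_zero.mpr hne), hconst, natDegree_C]
  have : 0 < Q.natDegree * (d - 1) := Nat.mul_pos hpos (by omega)
  omega

end Cancel

section Free

variable {R : Type*} [CommRing R] [IsDomain R] [CharZero R] {d : ℕ}

theorem composeXPowAddC_injective (hd : 2 ≤ d) :
    Function.Injective (composeXPowAddC (R := R) d) := by
  intro l₁ l₂ h
  have hlen := length_eq_of_composeXPowAddC_eq hd h
  induction l₁ generalizing l₂ with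
  | nil => exact (List.length_eq_zero_iff.mp hlen.symm).symm
  | cons c l₁ ih =>
    obtain _ | ⟨c', l₂⟩ := l₂
    · simp at hlen
    have hlen : l₁.length = l₂.length := Nat.succ.inj hlen
    have hd0 : d ≠ 0 := by omega
    obtain ⟨hl, hc⟩ := eq_and_eq_of_pow_add_C_eq hd (monic_composeXPowAddC hd0 l₁)
      (monic_composeXPowAddC hd0 l₂)
      (by rw [natDegree_composeXPowAddC hd0]; positivity)
      (by rw [natDegree_composeXPowAddC hd0, natDegree_composeXPowAddC hd0, hlen])
      (by simpa using h)
    rw [hc, ih hl hlen]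

end Free

theorem stmt14 (K : Type*) [Field K] [CharZero K] (d : ℕ) (hd : 2 ≤ d)
    (n m : ℕ) (b : Fin n → K) (b' : Fin m → K)
    (h : (List.ofFn fun i => (X : K[X]) ^ d + C (b i)).foldr (·.comp ·) X =
         (List.ofFn fun j => (X : K[X]) ^ d + C (b' j)).foldr (·.comp ·) X) :
    n = m ∧ ∀ (i : Fin n) (j : Fin m), (i : ℕ) = (j : ℕ) → b i = b' j := by
  have hb : List.ofFn b = List.ofFn b' := by
    refine composeXPowAddC_injective hd ?_
    rw [composeXPowAddC, composeXPowAddC, List.map_ofFn, List.map_ofFn]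
    exact h
  obtain ⟨rfl, hbb'⟩ := Sigma.mk.inj_iff.mp (List.ofFn_inj'.mp hb)
  refine ⟨rfl, fun i j hij => ?_⟩
  rw [eq_of_heq hbb', Fin.ext hij]
end

section
/- Let f(x) = x^2 − 2. If f^4(α) = ε·y^2 for some integers α, y and ε = ±1, then α = ±1 and ε·y^2 = −1. -/
/-!
Since squares are `0` or `1` mod 4, `x ^ 2 - 2 = y ^ 2` has no integer solution, so
`x ^ 2 - 2 = ε * y ^ 2` forces `ε = -1` and `x ^ 2 + y ^ 2 = 2`, i.e. `x = ±1` and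
`ε * y ^ 2 = -1`.
Taking `y = 1`, this says that `x ^ 2 - 2 = ±1` only for `x = ±1`, so the value `±1` propagates
back from `f^[3] α` to `α`.
-/

lemma sq_sub_two_ne_sq (x y : ℤ) : x ^ 2 - 2 ≠ y ^ 2 := by
  intro h
  have h4 := congrArg (Int.cast : ℤ → ZMod 4) h
  push_cast at h4
  generalize (x : ZMod 4) = a, (y : ZMod 4) = b at h4
  revert a b
  decide

lemma sq_eq_one_of_sq_add_sq_eq_two {x y : ℤ} (h : x ^ 2 + y ^ 2 = 2) : x ^ 2 = 1 := by
  have hx₁ : -1 ≤ x := by nlinarith [sq_nonneg y]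
  have hx₂ : x ≤ 1 := by nlinarith [sq_nonneg y]
  have hy₁ : -1 ≤ y := by nlinarith [sq_nonneg x]
  have hy₂ : y ≤ 1 := by nlinarith [sq_nonneg x]
  interval_cases x <;> interval_cases y <;> omega

lemma eq_one_or_neg_one_of_sq_sub_two_eq_mul_sq {x y ε : ℤ} (hε : ε = 1 ∨ ε = -1)
    (h : x ^ 2 - 2 = ε * y ^ 2) :
    (x = 1 ∨ x = -1) ∧ ε * y ^ 2 = -1 := by
  rcases hε with rfl | rfl
  · exact absurd (by simpa using h) (sq_sub_two_ne_sq x y)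
  · have hx : x ^ 2 = 1 := sq_eq_one_of_sq_add_sq_eq_two (by linarith)
    exact ⟨sq_eq_one_iff.mp hx, by linarith⟩

lemma eq_one_or_neg_one_of_sq_sub_two {x : ℤ} (h : x ^ 2 - 2 = 1 ∨ x ^ 2 - 2 = -1) :
    x = 1 ∨ x = -1 := by
  rcases h with h | h
  · exact (eq_one_or_neg_one_of_sq_sub_two_eq_mul_sq (y := 1) (Or.inl rfl) (by simpa using h)).1
  · exact (eq_one_or_neg_one_of_sq_sub_two_eq_mul_sq (y := 1) (Or.inr rfl) (by simpa using h)).1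

lemma eq_one_or_neg_one_of_iterate_sq_sub_two (n : ℕ) {x : ℤ}
    (h : (fun x : ℤ => x ^ 2 - 2)^[n] x = 1 ∨ (fun x : ℤ => x ^ 2 - 2)^[n] x = -1) :
    x = 1 ∨ x = -1 := by
  induction n generalizing x with
  | zero => exact h
  | succ n ih =>
    rw [Function.iterate_succ_apply] at h
    exact eq_one_or_neg_one_of_sq_sub_two (ih h)

theorem stmt16 (α y ε : ℤ) (hε : ε = 1 ∨ ε = -1)
    (h : (fun x : ℤ => x ^ 2 - 2)^[4] α = ε * y ^ 2) :
    (α = 1 ∨ α = -1) ∧ ε * y ^ 2 = -1 := by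
  rw [Function.iterate_succ_apply'] at h
  obtain ⟨h₃, hy⟩ := eq_one_or_neg_one_of_sq_sub_two_eq_mul_sq hε h
  exact ⟨eq_one_or_neg_one_of_iterate_sq_sub_two 3 h₃, hy⟩
end

section
/- Let f(x) = x^2 − 460. Then f^3(22) = 114^2, and 22 is not a preperiodic point of f. (Thus the iterate bound n ≥ 4 in the p-th power classification theorem for d = 2 cannot be lowered to 3.) -/
theorem Function.strictMono_iterate_of_forall_lt_map {α : Type*} [Preorder α] {f : α → α}
    {a : α} (hf : ∀ y, a ≤ y → y < f y) : StrictMono fun n : ℕ => f^[n] a := by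
  have hge : ∀ n : ℕ, a ≤ f^[n] a := by
    intro n
    induction n with
    | zero => exact le_rfl
    | succ k ih =>
      rw [Function.iterate_succ_apply']
      exact ih.trans (hf _ ih).le
  refine strictMono_nat_of_lt_succ fun n => ?_
  rw [Function.iterate_succ_apply']
  exact hf _ (hge n)

theorem lt_sq_sub_of_le {R : Type*} [CommRing R] [LinearOrder R] [IsStrictOrderedRing R]
    {a c y : R} (ha : 1 ≤ a) (hac : a < a ^ 2 - c) (hy : a ≤ y) : y < y ^ 2 - c := by
  nlinarith [mul_nonneg (sub_nonneg.2 hy) (by linarith : (0 : R) ≤ y + a - 1)]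

theorem stmt17 :
    (fun x : ℤ => x ^ 2 - 460)^[3] 22 = 114 ^ 2 ∧
    ¬(Set.range fun n : ℕ => (fun x : ℤ => x ^ 2 - 460)^[n] 22).Finite := by
  refine ⟨by norm_num [Function.iterate_succ_apply'], ?_⟩
  have hmono : StrictMono fun n : ℕ => (fun x : ℤ => x ^ 2 - 460)^[n] 22 :=
    Function.strictMono_iterate_of_forall_lt_map fun y hy =>
      lt_sq_sub_of_le (by norm_num) (by norm_num) hy
  exact Set.infinite_range_of_injective hmono.injective
end

section
/- Let f(x) = x^d + 1 with d ≥ 3. Then there are no integers α, y, no prime p dividing d, and no ε = ±1 such that f^3(α) = ε·y^p. -/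
/-!
Write `N = f²(α)` and `d = p m`. Then `f³(α) = (N^m)^p + 1 = ±y^p`, so `(N^m)^p` and `(N^m)^p + 1` are
both `p`-th powers up to sign; since consecutive nonzero `p`-th powers are too far apart, this forces
`N^m ∈ {0, -1}`. Hence `N ∈ {0, -1}`, i.e. `(α^d + 1)^d` is `-1` or `-2`; the first gives `α^d = -2`,
and `-2` is not a perfect `d`-th power.
-/

lemma pow_add_one_lt_add_one_pow {R : Type*} [CommSemiring R] [PartialOrder R]
    [IsStrictOrderedRing R] {a : R} (ha : 0 < a) {n : ℕ} (hn : 2 ≤ n) :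
    a ^ n + 1 < (a + 1) ^ n := by
  obtain ⟨k, rfl⟩ := Nat.exists_eq_add_of_le' hn
  calc a ^ (k + 2) + 1 < a ^ (k + 2) + 1 + (a ^ (k + 1) + a) :=
        lt_add_of_pos_right _ (add_pos (pow_pos ha _) ha)
    _ = (a ^ (k + 1) + 1 ^ (k + 1)) * (a + 1) := by ring
    _ ≤ (a + 1) ^ (k + 1) * (a + 1) := by
        gcongr; exact pow_add_pow_le ha.le zero_le_one k.succ_ne_zero
    _ = (a + 1) ^ (k + 2) := (pow_succ _ _).symm

namespace Int

lemma pow_add_one_ne_pow {a z : ℤ} (ha : 0 < a) (hz : 0 ≤ z) {n : ℕ} (hn : 2 ≤ n) :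
    a ^ n + 1 ≠ z ^ n := by
  intro h
  have haz : a < z := lt_of_pow_lt_pow_left₀ n hz (by omega)
  have : (a + 1) ^ n ≤ z ^ n := pow_le_pow_left₀ (by omega) haz n
  linarith [pow_add_one_lt_add_one_pow ha hn]

lemma eq_zero_or_eq_neg_one_of_pow_add_one_eq_pow {a z : ℤ} {n : ℕ} (hn : 2 ≤ n)
    (h : a ^ n + 1 = z ^ n) : a = 0 ∨ a = -1 := by
  rcases n.even_or_odd with hev | hodd
  · left
    by_contra ha
    rw [← hev.pow_abs a, ← hev.pow_abs z] at h
    exact pow_add_one_ne_pow (abs_pos.mpr ha) (abs_nonneg z) hn h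
  · by_contra ha
    rcases (by omega : 0 < a ∨ 1 < -a) with hpos | hneg
    · have hz : 0 < z := hodd.pow_pos_iff.mp (h ▸ by positivity)
      exact pow_add_one_ne_pow hpos hz.le hn h
    · -- `(a, z) ↦ (-z, -a)` is a symmetry of the equation for odd `n`
      have hsymm : (-z) ^ n + 1 = (-a) ^ n := by rw [hodd.neg_pow, hodd.neg_pow]; linarith
      have hz : z < 0 := by
        have : -a ≤ (-a) ^ n := le_self_pow₀ hneg.le (by omega)
        exact hodd.pow_neg_iff.mp (by rw [hodd.neg_pow] at this; linarith)
      exact pow_add_one_ne_pow (neg_pos.mpr hz) (by omega) hn hsymm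

lemma eq_zero_or_eq_neg_one_of_pow_add_one_eq_sign_mul_pow {p : ℕ} (hp : p.Prime)
    {a y ε : ℤ} (hε : ε = 1 ∨ ε = -1) (h : a ^ p + 1 = ε * y ^ p) : a = 0 ∨ a = -1 := by
  obtain ⟨z, hz⟩ : ∃ z : ℤ, a ^ p + 1 = z ^ p := by
    rcases hε with rfl | rfl
    · exact ⟨y, by rw [h, one_mul]⟩
    · rcases hp.eq_two_or_odd' with rfl | hodd
      · nlinarith [sq_nonneg a, sq_nonneg y]
      · exact ⟨-y, by rw [hodd.neg_pow, h, neg_one_mul]⟩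
  exact eq_zero_or_eq_neg_one_of_pow_add_one_eq_pow hp.two_le hz

lemma pow_ne_neg_two {n : ℕ} (hn : n ≠ 1) (t : ℤ) : t ^ n ≠ -2 := by
  intro h
  have : t.natAbs ^ n = 2 := by rw [← natAbs_pow, h]; rfl
  exact hn (Nat.prime_two.pow_eq_iff.mp this).2

end Int

theorem stmt19 (d : ℕ) (hd : 3 ≤ d) :
    ¬∃ (α y ε : ℤ) (p : ℕ), p.Prime ∧ p ∣ d ∧ (ε = 1 ∨ ε = -1) ∧
      (fun x : ℤ => x ^ d + 1)^[3] α = ε * y ^ p := by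
  rintro ⟨α, y, ε, p, hp, ⟨m, hm⟩, hε, h⟩
  have hm0 : m ≠ 0 := by rintro rfl; omega
  set N : ℤ := (α ^ d + 1) ^ d + 1 with hN
  have hNm : (N ^ m) ^ p + 1 = ε * y ^ p := by rwa [← pow_mul, mul_comm, ← hm]
  rcases Int.eq_zero_or_eq_neg_one_of_pow_add_one_eq_sign_mul_pow hp hε hNm with h0 | h1
  · have hN0 : (α ^ d + 1) ^ d = -1 := by linarith [pow_eq_zero_iff hm0 |>.mp h0]
    have hαd : α ^ d + 1 = -1 := (pow_eq_neg_one_iff.mp hN0).1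
    exact Int.pow_ne_neg_two (n := d) (by omega) α (by linarith)
  · have hN1 : N = -1 := (pow_eq_neg_one_iff.mp h1).1
    exact Int.pow_ne_neg_two (n := d) (by omega) (α ^ d + 1) (by linarith)
end
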